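/- Let F, G be Lipschitz with constants L_F, L_G in the entrywise sup-norm and assume 0 < L_F ≤ √α/(√2 m γ_F) and 0 < L_G ≤ 1/(n γ_G) with n, m > 1. Let (A,B) be the unique fixed point of (A,B) ↦ (γ_G G(B), γ_F F(A)). Then the random function iteration, which in each step picks uniformly random indices and updates one entry of B by B_{i,j} ← γ_F F_{i,j}(A) and one entry of A by A_{k,ℓ} ← (1-α)A_{k,ℓ} + α γ_G G_{k,ℓ}(B^{new}), satisfies E[‖(A^{t+1},B^{t+1}) − (A,B)‖_2²] ≤ L ‖(A^t,B^t) − (A,B)‖_2² with L := max{1 − α/m² + (1 + α γ_G² L_G²) γ_F² L_F², (1 + α γ_G² L_G²)(1 − 1/n²)} < 1, and the iterates converge almost surely to (A,B). -/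

import Mathlib

/-
The mean-square estimate is a direct computation. Replacing one entry of `B - B*` changes its
squared Frobenius norm only in that entry, and the new entry `γF (F(A) - F(A*))ᵢⱼ` is bounded by
`γF LF ‖A - A*‖_∞ ≤ γF LF ‖A - A*‖₂`; the relaxed update of `A` is a convex combination, so its
square is at most `(1 - α) u² + α v²`. Averaging over the `m²n²` index choices produces the two
rates, which the step-size conditions push below `1`.

Almost sure convergence is proved path by path in the sup-norm. Every update replaces one entry
of `A - A*` and one of `B - B*` by a quantity of absolute value at most `q = max (γF LF) (1 - α + α γG LG) < 1`
times the current sup-distance, and leaves the others alone; so the sup-distance never grows,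
and it drops by the factor `q` over any time window in which every entry has been refreshed.
By the second Borel–Cantelli lemma every index pattern recurs infinitely often almost surely,
so such windows follow one another forever.
-/

open MeasureTheory ProbabilityTheory

/-- Entrywise sup-norm of a matrix. -/
noncomputable def supNorm {m n : ℕ} (A : Matrix (Fin m) (Fin n) ℝ) : ℝ :=
  ‖(fun i j => A i j : Fin m → Fin n → ℝ)‖

/-- Frobenius norm of a matrix. -/
noncomputable def frobNorm {m n : ℕ} (A : Matrix (Fin m) (Fin n) ℝ) : ℝ :=
  Real.sqrt (∑ i, ∑ j, (A i j) ^ 2)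

/-- Single-entry update of `B` using `F`. -/
noncomputable def Rop {m n : ℕ} (F : Matrix (Fin m) (Fin m) ℝ → Matrix (Fin n) (Fin n) ℝ)
    (γF : ℝ) (i j : Fin n) (A : Matrix (Fin m) (Fin m) ℝ) (B : Matrix (Fin n) (Fin n) ℝ) :
    Matrix (Fin n) (Fin n) ℝ :=
  B + (γF * F A i j - B i j) • Matrix.single i j (1 : ℝ)

/-- Single-entry relaxed update of `A` using `G`. -/
noncomputable def Sop {m n : ℕ} (G : Matrix (Fin n) (Fin n) ℝ → Matrix (Fin m) (Fin m) ℝ)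
    (γG α : ℝ) (k l : Fin m) (A : Matrix (Fin m) (Fin m) ℝ) (B : Matrix (Fin n) (Fin n) ℝ) :
    Matrix (Fin m) (Fin m) ℝ :=
  A + (α * (γG * G B k l - A k l)) • Matrix.single k l (1 : ℝ)

/-- Squared `‖(A,B)‖₂`-distance between two matrix pairs. -/
noncomputable def pairDistSq {m n : ℕ}
    (p q : Matrix (Fin m) (Fin m) ℝ × Matrix (Fin n) (Fin n) ℝ) : ℝ :=
  frobNorm (p.1 - q.1) ^ 2 + frobNorm (p.2 - q.2) ^ 2

open Filter Topology

section Norms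

variable {p q : ℕ}

lemma abs_apply_le_supNorm (M : Matrix (Fin p) (Fin q) ℝ) (i : Fin p) (j : Fin q) :
    |M i j| ≤ supNorm M :=
  calc |M i j| = ‖M i j‖ := (Real.norm_eq_abs _).symm
    _ ≤ ‖(fun j => M i j : Fin q → ℝ)‖ := norm_le_pi_norm _ j
    _ ≤ supNorm M := norm_le_pi_norm (fun i j => M i j : Fin p → Fin q → ℝ) i

lemma supNorm_nonneg (M : Matrix (Fin p) (Fin q) ℝ) : 0 ≤ supNorm M :=
  norm_nonneg _

lemma supNorm_le_iff (M : Matrix (Fin p) (Fin q) ℝ) {c : ℝ} (hc : 0 ≤ c) :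
    supNorm M ≤ c ↔ ∀ i j, |M i j| ≤ c := by
  simp only [supNorm, pi_norm_le_iff_of_nonneg hc, Real.norm_eq_abs]

lemma frobNorm_sq (M : Matrix (Fin p) (Fin q) ℝ) : frobNorm M ^ 2 = ∑ i, ∑ j, M i j ^ 2 :=
  Real.sq_sqrt (by positivity)

lemma supNorm_le_frobNorm (M : Matrix (Fin p) (Fin q) ℝ) : supNorm M ≤ frobNorm M := by
  refine (supNorm_le_iff M (Real.sqrt_nonneg _)).2 fun i j => ?_
  rw [← Real.sqrt_sq_eq_abs]
  refine Real.sqrt_le_sqrt ?_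
  calc M i j ^ 2 ≤ ∑ j', M i j' ^ 2 :=
        Finset.single_le_sum (f := fun j' => M i j' ^ 2) (fun _ _ => sq_nonneg _)
          (Finset.mem_univ j)
    _ ≤ ∑ i', ∑ j', M i' j' ^ 2 :=
        Finset.single_le_sum (f := fun i' => ∑ j', M i' j' ^ 2) (fun _ _ => by positivity)
          (Finset.mem_univ i)

lemma frobNorm_sq_le_supNorm_sq (M : Matrix (Fin p) (Fin q) ℝ) :
    frobNorm M ^ 2 ≤ p * q * supNorm M ^ 2 := by
  have hentry : ∀ i j, M i j ^ 2 ≤ supNorm M ^ 2 := fun i j =>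
    sq_le_sq' (abs_le.1 (abs_apply_le_supNorm M i j)).1 (abs_le.1 (abs_apply_le_supNorm M i j)).2
  calc frobNorm M ^ 2 ≤ ∑ _i : Fin p, ∑ _j : Fin q, supNorm M ^ 2 := by
        rw [frobNorm_sq]
        exact Finset.sum_le_sum fun i _ => Finset.sum_le_sum fun j _ => hentry i j
    _ = p * q * supNorm M ^ 2 := by simp [mul_assoc]

lemma sq_apply_le_of_supNorm_le {M : Matrix (Fin p) (Fin q) ℝ} {p' q' : ℕ}
    {N : Matrix (Fin p') (Fin q') ℝ} {L : ℝ} (h : supNorm M ≤ L * supNorm N)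
    (i : Fin p) (j : Fin q) : M i j ^ 2 ≤ L ^ 2 * frobNorm N ^ 2 := by
  have h1 : |M i j| ≤ L * supNorm N := (abs_apply_le_supNorm M i j).trans h
  have h2 : |L * supNorm N| ≤ |L| * frobNorm N := by
    rw [abs_mul, abs_of_nonneg (supNorm_nonneg N)]
    exact mul_le_mul_of_nonneg_left (supNorm_le_frobNorm N) (abs_nonneg L)
  calc M i j ^ 2 ≤ (L * supNorm N) ^ 2 := sq_le_sq' (abs_le.1 h1).1 (abs_le.1 h1).2
    _ = |L * supNorm N| ^ 2 := (sq_abs _).symm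
    _ ≤ (|L| * frobNorm N) ^ 2 := by gcongr
    _ = L ^ 2 * frobNorm N ^ 2 := by rw [mul_pow, sq_abs]

lemma frobNorm_sq_of_apply_eq_ite {M X : Matrix (Fin p) (Fin q) ℝ} {k : Fin p} {l : Fin q}
    {y : ℝ} (h : ∀ a b, M a b = if k = a ∧ l = b then y else X a b) :
    frobNorm M ^ 2 = frobNorm X ^ 2 - X k l ^ 2 + y ^ 2 := by
  have hsq : ∀ a b, M a b ^ 2 = X a b ^ 2 + if k = a ∧ l = b then y ^ 2 - X k l ^ 2 else 0 := by
    intro a b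
    rw [h]
    split_ifs with hab
    · obtain ⟨rfl, rfl⟩ := hab; ring
    · ring
  simp only [frobNorm_sq, hsq, ite_and, Finset.sum_add_distrib, Finset.sum_ite_irrel,
    Finset.sum_ite_eq, Finset.mem_univ, if_true, Finset.sum_const_zero]
  ring

end Norms

section MeanSquare

variable {m n : ℕ} {F : Matrix (Fin m) (Fin m) ℝ → Matrix (Fin n) (Fin n) ℝ}
  {G : Matrix (Fin n) (Fin n) ℝ → Matrix (Fin m) (Fin m) ℝ} {γF γG α LF LG : ℝ}
  {Astar : Matrix (Fin m) (Fin m) ℝ} {Bstar : Matrix (Fin n) (Fin n) ℝ}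

lemma Rop_sub_apply (hB : Bstar = γF • F Astar) (i j : Fin n) (A : Matrix (Fin m) (Fin m) ℝ)
    (B : Matrix (Fin n) (Fin n) ℝ) (a b : Fin n) :
    (Rop F γF i j A B - Bstar) a b
      = if i = a ∧ j = b then γF * (F A - F Astar) i j else (B - Bstar) a b := by
  subst hB
  simp only [Rop, Matrix.sub_apply, Matrix.add_apply, Matrix.smul_apply, Matrix.single_apply,
    smul_eq_mul]
  split_ifs with h
  · obtain ⟨rfl, rfl⟩ := h; ring
  · ring

lemma Sop_sub_apply (hA : Astar = γG • G Bstar) (k l : Fin m) (A : Matrix (Fin m) (Fin m) ℝ)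
    (B : Matrix (Fin n) (Fin n) ℝ) (a b : Fin m) :
    (Sop G γG α k l A B - Astar) a b
      = if k = a ∧ l = b then (1 - α) * (A - Astar) k l + α * γG * (G B - G Bstar) k l
        else (A - Astar) a b := by
  subst hA
  simp only [Sop, Matrix.sub_apply, Matrix.add_apply, Matrix.smul_apply, Matrix.single_apply,
    smul_eq_mul]
  split_ifs with h
  · obtain ⟨rfl, rfl⟩ := h; ring
  · ring

lemma frobNorm_Rop_sub_sq_le (hF : ∀ A A', supNorm (F A - F A') ≤ LF * supNorm (A - A'))
    (hB : Bstar = γF • F Astar) (i j : Fin n) (A : Matrix (Fin m) (Fin m) ℝ)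
    (B : Matrix (Fin n) (Fin n) ℝ) :
    frobNorm (Rop F γF i j A B - Bstar) ^ 2 ≤ frobNorm (B - Bstar) ^ 2 - (B - Bstar) i j ^ 2
      + γF ^ 2 * LF ^ 2 * frobNorm (A - Astar) ^ 2 := by
  rw [frobNorm_sq_of_apply_eq_ite (Rop_sub_apply hB i j A B), mul_pow, mul_assoc]
  gcongr
  exact sq_apply_le_of_supNorm_le (hF A Astar) i j

lemma frobNorm_Sop_sub_sq_le (hα0 : 0 ≤ α) (hα1 : α ≤ 1)
    (hG : ∀ B B', supNorm (G B - G B') ≤ LG * supNorm (B - B'))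
    (hA : Astar = γG • G Bstar) (k l : Fin m) (A : Matrix (Fin m) (Fin m) ℝ)
    (B : Matrix (Fin n) (Fin n) ℝ) :
    frobNorm (Sop G γG α k l A B - Astar) ^ 2 ≤ frobNorm (A - Astar) ^ 2
      - α * (A - Astar) k l ^ 2 + α * (γG ^ 2 * LG ^ 2 * frobNorm (B - Bstar) ^ 2) := by
  rw [frobNorm_sq_of_apply_eq_ite (Sop_sub_apply hA k l A B)]
  set u := (A - Astar) k l
  set v := γG * (G B - G Bstar) k l
  have hv : v ^ 2 ≤ γG ^ 2 * LG ^ 2 * frobNorm (B - Bstar) ^ 2 := by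
    rw [mul_pow, mul_assoc]
    gcongr
    exact sq_apply_le_of_supNorm_le (hG B Bstar) k l
  have hconvex : ((1 - α) * u + α * v) ^ 2 ≤ (1 - α) * u ^ 2 + α * v ^ 2 := by
    nlinarith [mul_nonneg (mul_nonneg hα0 (sub_nonneg.2 hα1)) (sq_nonneg (u - v))]
  have hαv := mul_le_mul_of_nonneg_left hv hα0
  rw [mul_assoc α γG]
  linarith

lemma sum_frobNorm_Rop_sub_sq_le (hF : ∀ A A', supNorm (F A - F A') ≤ LF * supNorm (A - A'))
    (hB : Bstar = γF • F Astar) (A : Matrix (Fin m) (Fin m) ℝ) (B : Matrix (Fin n) (Fin n) ℝ) :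
    ∑ i, ∑ j, frobNorm (Rop F γF i j A B - Bstar) ^ 2
      ≤ ((n : ℝ) ^ 2 - 1) * frobNorm (B - Bstar) ^ 2
        + (n : ℝ) ^ 2 * (γF ^ 2 * LF ^ 2 * frobNorm (A - Astar) ^ 2) := by
  calc ∑ i, ∑ j, frobNorm (Rop F γF i j A B - Bstar) ^ 2
      ≤ ∑ i, ∑ j, (frobNorm (B - Bstar) ^ 2 - (B - Bstar) i j ^ 2
          + γF ^ 2 * LF ^ 2 * frobNorm (A - Astar) ^ 2) :=
        Finset.sum_le_sum fun i _ => Finset.sum_le_sum fun j _ =>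
          frobNorm_Rop_sub_sq_le hF hB i j A B
    _ = _ := by
        simp only [Finset.sum_add_distrib, Finset.sum_sub_distrib, Finset.sum_const,
          Finset.card_univ, Fintype.card_fin, nsmul_eq_mul, ← frobNorm_sq]
        ring

lemma sum_pairDistSq_step_le (hα0 : 0 ≤ α) (hα1 : α ≤ 1)
    (hF : ∀ A A', supNorm (F A - F A') ≤ LF * supNorm (A - A'))
    (hG : ∀ B B', supNorm (G B - G B') ≤ LG * supNorm (B - B'))
    (hA : Astar = γG • G Bstar) (hB : Bstar = γF • F Astar)
    (A : Matrix (Fin m) (Fin m) ℝ) (B : Matrix (Fin n) (Fin n) ℝ) :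
    ∑ k : Fin m, ∑ l : Fin m, ∑ i : Fin n, ∑ j : Fin n,
      pairDistSq (Sop G γG α k l A (Rop F γF i j A B), Rop F γF i j A B) (Astar, Bstar)
        ≤ (n : ℝ) ^ 2 * ((m : ℝ) ^ 2 - α) * frobNorm (A - Astar) ^ 2
          + (m : ℝ) ^ 2 * (1 + α * (γG ^ 2 * LG ^ 2))
            * (((n : ℝ) ^ 2 - 1) * frobNorm (B - Bstar) ^ 2
              + (n : ℝ) ^ 2 * (γF ^ 2 * LF ^ 2 * frobNorm (A - Astar) ^ 2)) := by
  set c := 1 + α * (γG ^ 2 * LG ^ 2)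
  set gB := fun i j => frobNorm (Rop F γF i j A B - Bstar) ^ 2
  have hpoint : ∀ k l i j, pairDistSq
      (Sop G γG α k l A (Rop F γF i j A B), Rop F γF i j A B) (Astar, Bstar)
        ≤ frobNorm (A - Astar) ^ 2 - α * (A - Astar) k l ^ 2 + c * gB i j := fun k l i j => by
    have := frobNorm_Sop_sub_sq_le hα0 hα1 hG hA k l A (Rop F γF i j A B)
    simp only [pairDistSq, gB, c]
    linarith
  calc _ ≤ ∑ k : Fin m, ∑ l : Fin m, ∑ i : Fin n, ∑ j : Fin n,
        (frobNorm (A - Astar) ^ 2 - α * (A - Astar) k l ^ 2 + c * gB i j) :=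
        Finset.sum_le_sum fun k _ => Finset.sum_le_sum fun l _ =>
          Finset.sum_le_sum fun i _ => Finset.sum_le_sum fun j _ => hpoint k l i j
    _ = (n : ℝ) ^ 2 * ((m : ℝ) ^ 2 - α) * frobNorm (A - Astar) ^ 2
          + (m : ℝ) ^ 2 * c * ∑ i, ∑ j, gB i j := by
        simp only [Finset.sum_add_distrib, Finset.sum_sub_distrib, Finset.sum_const,
          Finset.card_univ, Fintype.card_fin, nsmul_eq_mul, ← Finset.mul_sum, ← frobNorm_sq]
        ring
    _ ≤ _ := by
        have hc : 0 ≤ (m : ℝ) ^ 2 * c := by positivity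
        gcongr
        exact sum_frobNorm_Rop_sub_sq_le hF hB A B

lemma mean_pairDistSq_le (hm : 0 < m) (hn : 0 < n) (hα0 : 0 ≤ α) (hα1 : α ≤ 1)
    (hF : ∀ A A', supNorm (F A - F A') ≤ LF * supNorm (A - A'))
    (hG : ∀ B B', supNorm (G B - G B') ≤ LG * supNorm (B - B'))
    (hA : Astar = γG • G Bstar) (hB : Bstar = γF • F Astar)
    (A : Matrix (Fin m) (Fin m) ℝ) (B : Matrix (Fin n) (Fin n) ℝ) :
    (1 / ((m : ℝ) ^ 2 * (n : ℝ) ^ 2)) *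
        ∑ k : Fin m, ∑ l : Fin m, ∑ i : Fin n, ∑ j : Fin n,
          pairDistSq
            (Sop G γG α k l A (Rop F γF i j A B), Rop F γF i j A B) (Astar, Bstar)
        ≤ max (1 - α / (m : ℝ) ^ 2 + (1 + α * γG ^ 2 * LG ^ 2) * γF ^ 2 * LF ^ 2)
              ((1 + α * γG ^ 2 * LG ^ 2) * (1 - 1 / (n : ℝ) ^ 2))
          * pairDistSq (A, B) (Astar, Bstar) := by
  set L₁ := 1 - α / (m : ℝ) ^ 2 + (1 + α * γG ^ 2 * LG ^ 2) * γF ^ 2 * LF ^ 2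
  set L₂ := (1 + α * γG ^ 2 * LG ^ 2) * (1 - 1 / (n : ℝ) ^ 2)
  set dA := frobNorm (A - Astar) ^ 2
  set dB := frobNorm (B - Bstar) ^ 2
  have hrate : (n : ℝ) ^ 2 * ((m : ℝ) ^ 2 - α) * dA + (m : ℝ) ^ 2 * (1 + α * (γG ^ 2 * LG ^ 2))
      * (((n : ℝ) ^ 2 - 1) * dB + (n : ℝ) ^ 2 * (γF ^ 2 * LF ^ 2 * dA))
        = (m : ℝ) ^ 2 * (n : ℝ) ^ 2 * (L₁ * dA + L₂ * dB) := by
    simp only [L₁, L₂]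
    field_simp
    ring
  have hsum := sum_pairDistSq_step_le hα0 hα1 hF hG hA hB A B
  rw [hrate] at hsum
  calc _ ≤ 1 / ((m : ℝ) ^ 2 * (n : ℝ) ^ 2) * ((m : ℝ) ^ 2 * (n : ℝ) ^ 2 * (L₁ * dA + L₂ * dB)) :=
        by gcongr
    _ = L₁ * dA + L₂ * dB := by field_simp
    _ ≤ max L₁ L₂ * pairDistSq (A, B) (Astar, Bstar) := by
        rw [pairDistSq, mul_add]
        exact add_le_add (by gcongr; exact le_max_left _ _) (by gcongr; exact le_max_right _ _)

end MeanSquare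

section Rates

variable {m n : ℕ} {γF γG LF LG α : ℝ}

lemma sq_mul_le_of_le_div_mul {γ L a b : ℝ} (hγ : 0 < γ) (hL : 0 ≤ L) (h : L ≤ a / (b * γ)) :
    (γ * L) ^ 2 ≤ (a / b) ^ 2 := by
  rw [← div_div, le_div_iff₀' hγ] at h
  exact pow_le_pow_left₀ (by positivity) h 2

lemma rate_A_lt_one (hm : 0 < m) (hn : 0 < n) (hα : 0 < α) (hα1 : α < 1)
    (hF : (γF * LF) ^ 2 ≤ α / (2 * (m : ℝ) ^ 2)) (hG : (γG * LG) ^ 2 ≤ 1 / (n : ℝ) ^ 2) :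
    1 - α / (m : ℝ) ^ 2 + (1 + α * γG ^ 2 * LG ^ 2) * γF ^ 2 * LF ^ 2 < 1 := by
  have hn1 : 1 / (n : ℝ) ^ 2 ≤ 1 := by
    rw [div_le_one (by positivity)]
    exact one_le_pow₀ (by exact_mod_cast hn)
  have hαG : α * (γG * LG) ^ 2 < 1 := by nlinarith
  have hF' : (γF * LF) ^ 2 ≤ α / (m : ℝ) ^ 2 / 2 := by rwa [div_div, mul_comm ((m : ℝ) ^ 2)]
  have hA : 0 < α / (m : ℝ) ^ 2 / 2 := by positivity
  calc 1 - α / (m : ℝ) ^ 2 + (1 + α * γG ^ 2 * LG ^ 2) * γF ^ 2 * LF ^ 2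
      = 1 - α / (m : ℝ) ^ 2 + (1 + α * (γG * LG) ^ 2) * (γF * LF) ^ 2 := by ring
    _ ≤ 1 - α / (m : ℝ) ^ 2 + (1 + α * (γG * LG) ^ 2) * (α / (m : ℝ) ^ 2 / 2) := by gcongr
    _ < 1 - α / (m : ℝ) ^ 2 + 2 * (α / (m : ℝ) ^ 2 / 2) := by gcongr; linarith
    _ = 1 := by ring

lemma rate_B_lt_one (hn : 0 < n) (hα : 0 < α) (hα1 : α < 1)
    (hG : (γG * LG) ^ 2 ≤ 1 / (n : ℝ) ^ 2) :
    (1 + α * γG ^ 2 * LG ^ 2) * (1 - 1 / (n : ℝ) ^ 2) < 1 := by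
  have hv : 0 < 1 / (n : ℝ) ^ 2 := by positivity
  have hv1 : 1 / (n : ℝ) ^ 2 ≤ 1 := by
    rw [div_le_one (by positivity)]
    exact one_le_pow₀ (by exact_mod_cast hn)
  have hx0 : 0 ≤ α * (γG * LG) ^ 2 := by positivity
  have hx : α * (γG * LG) ^ 2 < 1 / (n : ℝ) ^ 2 :=
    (mul_le_mul_of_nonneg_left hG hα.le).trans_lt (mul_lt_of_lt_one_left hv hα1)
  nlinarith

end Rates

section Sweeps

lemma abs_le_of_hit_since {X : ℕ → ℝ} {hit : ℕ → Prop} {c : ℝ} {T : ℕ}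
    (hhit : ∀ t, T ≤ t → hit t → |X (t + 1)| ≤ c) (hmiss : ∀ t, ¬ hit t → X (t + 1) = X t)
    {u : ℕ} (hTu : T ≤ u) (hu : hit u) : ∀ t, u < t → |X t| ≤ c := by
  intro t hut
  induction t, hut using Nat.le_induction with
  | base => exact hhit u hTu hu
  | succ t hut ih =>
    by_cases ht : hit t
    · exact hhit t (by omega) ht
    · rwa [hmiss t ht]

lemma exists_forall_hit_between {E : Type*} [Finite E] {hit : ℕ → E → Prop}
    (hfreq : ∀ e, ∃ᶠ t in atTop, hit t e) (T : ℕ) :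
    ∃ T', ∀ e, ∃ u, T ≤ u ∧ u < T' ∧ hit u e := by
  choose u hTu hu using fun e => frequently_atTop.1 (hfreq e) T
  obtain ⟨N, hN⟩ := (Set.finite_range u).bddAbove
  exact ⟨N + 1, fun e => ⟨u e, hTu e, Nat.lt_succ_of_le (hN ⟨e, rfl⟩), hu e⟩⟩

lemma tendsto_zero_of_antitone_of_forall_exists_le_mul {V : ℕ → ℝ} {q : ℝ} (hV : Antitone V)
    (hV0 : ∀ t, 0 ≤ V t) (hq0 : 0 ≤ q) (hq1 : q < 1) (hdrop : ∀ T, ∃ T', V T' ≤ q * V T) :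
    Tendsto V atTop (𝓝 0) := by
  have hiter : ∀ k : ℕ, ∃ T, V T ≤ q ^ k * V 0 := by
    intro k
    induction k with
    | zero => exact ⟨0, by simp⟩
    | succ k ih =>
      obtain ⟨T, hT⟩ := ih
      obtain ⟨T', hT'⟩ := hdrop T
      refine ⟨T', hT'.trans ?_⟩
      rw [pow_succ', mul_assoc]
      exact mul_le_mul_of_nonneg_left hT hq0
  refine tendsto_order.2 ⟨fun a ha => Eventually.of_forall fun t => ha.trans_le (hV0 t),
    fun ε hε => ?_⟩
  have hgeom : Tendsto (fun k : ℕ => q ^ k * V 0) atTop (𝓝 0) := by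
    simpa using (tendsto_pow_atTop_nhds_zero_of_lt_one hq0 hq1).mul_const (V 0)
  obtain ⟨k, hk⟩ := (hgeom.eventually (gt_mem_nhds hε)).exists
  obtain ⟨T, hT⟩ := hiter k
  exact eventually_atTop.2 ⟨T, fun t ht => ((hV ht).trans hT).trans_lt hk⟩

theorem tendsto_zero_of_frequently_hit {E : Type*} [Finite E] {X : ℕ → E → ℝ} {V : ℕ → ℝ}
    {hit : ℕ → E → Prop} {q : ℝ} (hq0 : 0 ≤ q) (hq1 : q < 1) (hV0 : ∀ t, 0 ≤ V t)
    (habs : ∀ t e, |X t e| ≤ V t) (hVle : ∀ t c, 0 ≤ c → (∀ e, |X t e| ≤ c) → V t ≤ c)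
    (hhit : ∀ t e, hit t e → |X (t + 1) e| ≤ q * V t)
    (hmiss : ∀ t e, ¬ hit t e → X (t + 1) e = X t e) (hfreq : ∀ e, ∃ᶠ t in atTop, hit t e) :
    Tendsto V atTop (𝓝 0) := by
  have hmono : Antitone V := antitone_nat_of_succ_le fun t => hVle (t + 1) _ (hV0 t) fun e => by
    by_cases h : hit t e
    · exact (hhit t e h).trans (mul_le_of_le_one_left (hV0 t) hq1.le)
    · rw [hmiss t e h]; exact habs t e
  refine tendsto_zero_of_antitone_of_forall_exists_le_mul hmono hV0 hq0 hq1 fun T => ?_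
  obtain ⟨T', hT'⟩ := exists_forall_hit_between hfreq T
  refine ⟨T', hVle T' _ (mul_nonneg hq0 (hV0 T)) fun e => ?_⟩
  obtain ⟨u, hTu, huT', hu⟩ := hT' e
  exact abs_le_of_hit_since (X := fun t => X t e)
    (fun t hTt ht => (hhit t e ht).trans (by gcongr; exact hmono hTt))
    (fun t ht => hmiss t e ht) hTu hu T' huT'

end Sweeps

section Pathwise

variable {m n : ℕ} {F : Matrix (Fin m) (Fin m) ℝ → Matrix (Fin n) (Fin n) ℝ}
  {G : Matrix (Fin n) (Fin n) ℝ → Matrix (Fin m) (Fin m) ℝ} {γF γG α LF LG : ℝ}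
  {Astar : Matrix (Fin m) (Fin m) ℝ} {Bstar : Matrix (Fin n) (Fin n) ℝ}

noncomputable def pairSupDist (p q : Matrix (Fin m) (Fin m) ℝ × Matrix (Fin n) (Fin n) ℝ) : ℝ :=
  max (supNorm (p.1 - q.1)) (supNorm (p.2 - q.2))

lemma pairSupDist_nonneg (p q : Matrix (Fin m) (Fin m) ℝ × Matrix (Fin n) (Fin n) ℝ) :
    0 ≤ pairSupDist p q :=
  le_max_of_le_left (supNorm_nonneg _)

lemma pairDistSq_le_pairSupDist_sq (p q : Matrix (Fin m) (Fin m) ℝ × Matrix (Fin n) (Fin n) ℝ) :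
    pairDistSq p q ≤ ((m : ℝ) * m + n * n) * pairSupDist p q ^ 2 := by
  have h1 : supNorm (p.1 - q.1) ^ 2 ≤ pairSupDist p q ^ 2 :=
    pow_le_pow_left₀ (supNorm_nonneg _) (le_max_left _ _) 2
  have h2 : supNorm (p.2 - q.2) ^ 2 ≤ pairSupDist p q ^ 2 :=
    pow_le_pow_left₀ (supNorm_nonneg _) (le_max_right _ _) 2
  calc pairDistSq p q
      ≤ m * m * supNorm (p.1 - q.1) ^ 2 + n * n * supNorm (p.2 - q.2) ^ 2 :=
        add_le_add (frobNorm_sq_le_supNorm_sq _) (frobNorm_sq_le_supNorm_sq _)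
    _ ≤ m * m * pairSupDist p q ^ 2 + n * n * pairSupDist p q ^ 2 := by gcongr
    _ = ((m : ℝ) * m + n * n) * pairSupDist p q ^ 2 := by ring

lemma tendsto_pairDistSq_of_tendsto_pairSupDist
    {p : ℕ → Matrix (Fin m) (Fin m) ℝ × Matrix (Fin n) (Fin n) ℝ}
    {p₀ : Matrix (Fin m) (Fin m) ℝ × Matrix (Fin n) (Fin n) ℝ}
    (h : Tendsto (fun t => pairSupDist (p t) p₀) atTop (𝓝 0)) :
    Tendsto (fun t => pairDistSq (p t) p₀) atTop (𝓝 0) := by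
  refine squeeze_zero (fun t => by unfold pairDistSq; positivity)
    (fun t => pairDistSq_le_pairSupDist_sq (p t) p₀) ?_
  simpa using (h.pow 2).const_mul ((m : ℝ) * m + n * n)

lemma abs_Rop_sub_apply_self_le (hγF : 0 ≤ γF)
    (hF : ∀ A A', supNorm (F A - F A') ≤ LF * supNorm (A - A')) (hB : Bstar = γF • F Astar)
    (i j : Fin n) (A : Matrix (Fin m) (Fin m) ℝ) (B : Matrix (Fin n) (Fin n) ℝ) :
    |(Rop F γF i j A B - Bstar) i j| ≤ γF * LF * supNorm (A - Astar) := by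
  rw [Rop_sub_apply hB, if_pos ⟨rfl, rfl⟩, abs_mul, abs_of_nonneg hγF, mul_assoc]
  exact mul_le_mul_of_nonneg_left ((abs_apply_le_supNorm _ i j).trans (hF A Astar)) hγF

lemma abs_Sop_sub_apply_self_le (hα0 : 0 ≤ α) (hα1 : α ≤ 1) (hγG : 0 ≤ γG)
    (hG : ∀ B B', supNorm (G B - G B') ≤ LG * supNorm (B - B')) (hA : Astar = γG • G Bstar)
    (k l : Fin m) (A : Matrix (Fin m) (Fin m) ℝ) (B : Matrix (Fin n) (Fin n) ℝ) :
    |(Sop G γG α k l A B - Astar) k l|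
      ≤ (1 - α) * supNorm (A - Astar) + α * (γG * LG) * supNorm (B - Bstar) := by
  rw [Sop_sub_apply hA, if_pos ⟨rfl, rfl⟩]
  refine (abs_add_le _ _).trans (add_le_add ?_ ?_)
  · rw [abs_mul, abs_of_nonneg (sub_nonneg.2 hα1)]
    exact mul_le_mul_of_nonneg_left (abs_apply_le_supNorm _ k l) (sub_nonneg.2 hα1)
  · rw [abs_mul, abs_of_nonneg (by positivity), mul_assoc α, mul_assoc α, mul_assoc]
    gcongr
    exact (abs_apply_le_supNorm _ k l).trans (hG B Bstar)

lemma supNorm_Rop_sub_le (hγF : 0 ≤ γF) (hFL : γF * LF ≤ 1)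
    (hF : ∀ A A', supNorm (F A - F A') ≤ LF * supNorm (A - A')) (hB : Bstar = γF • F Astar)
    (i j : Fin n) (A : Matrix (Fin m) (Fin m) ℝ) (B : Matrix (Fin n) (Fin n) ℝ) :
    supNorm (Rop F γF i j A B - Bstar) ≤ pairSupDist (A, B) (Astar, Bstar) := by
  refine (supNorm_le_iff _ (pairSupDist_nonneg _ _)).2 fun a b => ?_
  by_cases h : i = a ∧ j = b
  · obtain ⟨rfl, rfl⟩ := h
    calc _ ≤ γF * LF * supNorm (A - Astar) := abs_Rop_sub_apply_self_le hγF hF hB i j A B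
      _ ≤ 1 * supNorm (A - Astar) := by gcongr; exact supNorm_nonneg _
      _ ≤ pairSupDist (A, B) (Astar, Bstar) := (one_mul _).trans_le (le_max_left _ _)
  · rw [Rop_sub_apply hB, if_neg h]
    exact (abs_apply_le_supNorm _ a b).trans (le_max_right _ _)

lemma abs_Sop_Rop_sub_apply_self_le (hα0 : 0 ≤ α) (hα1 : α ≤ 1) (hγF : 0 ≤ γF) (hγG : 0 ≤ γG)
    (hLG : 0 ≤ LG) (hFL : γF * LF ≤ 1)
    (hF : ∀ A A', supNorm (F A - F A') ≤ LF * supNorm (A - A'))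
    (hG : ∀ B B', supNorm (G B - G B') ≤ LG * supNorm (B - B'))
    (hA : Astar = γG • G Bstar) (hB : Bstar = γF • F Astar) (k l : Fin m) (i j : Fin n)
    (A : Matrix (Fin m) (Fin m) ℝ) (B : Matrix (Fin n) (Fin n) ℝ) :
    |(Sop G γG α k l A (Rop F γF i j A B) - Astar) k l|
      ≤ (1 - α + α * (γG * LG)) * pairSupDist (A, B) (Astar, Bstar) := by
  have hB' := supNorm_Rop_sub_le hγF hFL hF hB i j A B
  calc _ ≤ (1 - α) * supNorm (A - Astar) + α * (γG * LG) * supNorm (Rop F γF i j A B - Bstar) :=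
        abs_Sop_sub_apply_self_le hα0 hα1 hγG hG hA k l A _
    _ ≤ (1 - α) * pairSupDist (A, B) (Astar, Bstar)
          + α * (γG * LG) * pairSupDist (A, B) (Astar, Bstar) := by
        gcongr
        exact le_max_left _ _
    _ = _ := by ring

theorem tendsto_pairSupDist_of_frequently (hm : 0 < m) (hn : 0 < n) (hα : 0 < α) (hα1 : α ≤ 1)
    (hγF : 0 ≤ γF) (hγG : 0 ≤ γG) (hLG : 0 ≤ LG) (hFL : γF * LF < 1) (hGL : γG * LG < 1)
    (hF : ∀ A A', supNorm (F A - F A') ≤ LF * supNorm (A - A'))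
    (hG : ∀ B B', supNorm (G B - G B') ≤ LG * supNorm (B - B'))
    (hA : Astar = γG • G Bstar) (hB : Bstar = γF • F Astar)
    {A : ℕ → Matrix (Fin m) (Fin m) ℝ} {B : ℕ → Matrix (Fin n) (Fin n) ℝ}
    {idx : ℕ → (Fin m × Fin m) × (Fin n × Fin n)}
    (hrecB : ∀ t, B (t + 1) = Rop F γF (idx t).2.1 (idx t).2.2 (A t) (B t))
    (hrecA : ∀ t, A (t + 1) = Sop G γG α (idx t).1.1 (idx t).1.2 (A t) (B (t + 1)))
    (hfreq : ∀ v, ∃ᶠ t in atTop, idx t = v) :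
    Tendsto (fun t => pairSupDist (A t, B t) (Astar, Bstar)) atTop (𝓝 0) := by
  set V := fun t => pairSupDist (A t, B t) (Astar, Bstar)
  set q := max (γF * LF) (1 - α + α * (γG * LG))
  have hV0 : ∀ t, 0 ≤ V t := fun t => pairSupDist_nonneg _ _
  have hq0 : 0 ≤ q := le_max_of_le_right (by nlinarith [mul_nonneg hγG hLG])
  have hq1 : q < 1 := max_lt hFL (by nlinarith)
  refine tendsto_zero_of_frequently_hit (E := (Fin m × Fin m) ⊕ (Fin n × Fin n))
    (X := fun t => Sum.elim (fun e => (A t - Astar) e.1 e.2) (fun e => (B t - Bstar) e.1 e.2))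
    (hit := fun t => Sum.elim (fun e => (idx t).1 = e) (fun e => (idx t).2 = e))
    hq0 hq1 hV0 ?habs ?hVle ?hhit ?hmiss ?hfreq
  case habs =>
    rintro t (e | e)
    · exact (abs_apply_le_supNorm (A t - Astar) e.1 e.2).trans (le_max_left _ _)
    · exact (abs_apply_le_supNorm (B t - Bstar) e.1 e.2).trans (le_max_right _ _)
  case hVle =>
    intro t c hc h
    exact max_le ((supNorm_le_iff _ hc).2 fun a b => h (.inl (a, b)))
      ((supNorm_le_iff _ hc).2 fun a b => h (.inr (a, b)))
  case hhit =>
    rintro t (⟨a, b⟩ | ⟨a, b⟩) (h : _ = (a, b))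
    · dsimp only [Sum.elim_inl]
      rw [hrecA, hrecB, h]
      exact (abs_Sop_Rop_sub_apply_self_le hα.le hα1 hγF hγG hLG hFL.le hF hG hA hB
        a b _ _ _ _).trans (mul_le_mul_of_nonneg_right (le_max_right _ _) (hV0 t))
    · dsimp only [Sum.elim_inr]
      rw [hrecB, h]
      exact (abs_Rop_sub_apply_self_le hγF hF hB a b _ _).trans
        (mul_le_mul (le_max_left _ _) (le_max_left _ _) (supNorm_nonneg _) hq0)
  case hmiss =>
    rintro t (⟨a, b⟩ | ⟨a, b⟩) (h : ¬ _ = (a, b))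
    · simp only [Sum.elim_inl]
      rw [hrecA, Sop_sub_apply hA, if_neg fun h' => h (Prod.ext h'.1 h'.2)]
    · simp only [Sum.elim_inr]
      rw [hrecB, Rop_sub_apply hB, if_neg fun h' => h (Prod.ext h'.1 h'.2)]
  case hfreq =>
    rintro (e | e)
    · exact (hfreq (e, (⟨0, hn⟩, ⟨0, hn⟩))).mono fun t h => by simp only [Sum.elim_inl, h]
    · exact (hfreq ((⟨0, hm⟩, ⟨0, hm⟩), e)).mono fun t h => by simp only [Sum.elim_inr, h]

end Pathwise

section BorelCantelli

lemma ae_frequently_eq_of_iIndepFun {Ω β : Type*} [MeasurableSpace Ω] {μ : Measure Ω}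
    [MeasurableSpace β] [MeasurableSingletonClass β] [Countable β] {ξ : ℕ → Ω → β}
    (hmeas : ∀ t, Measurable (ξ t)) (hindep : iIndepFun ξ μ)
    (hsum : ∀ v, ∑' t, μ (ξ t ⁻¹' {v}) = ⊤) :
    ∀ᵐ ω ∂μ, ∀ v, ∃ᶠ t in atTop, ξ t ω = v := by
  have := hindep.isProbabilityMeasure
  refine ae_all_iff.2 fun v => ?_
  have hsm : ∀ t, MeasurableSet (ξ t ⁻¹' {v}) := fun t => hmeas t (measurableSet_singleton v)
  have hind : iIndepSet (fun t => ξ t ⁻¹' {v}) μ :=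
    (iIndepSet_iff_meas_biInter hsm).2 fun s =>
      hindep.measure_inter_preimage_eq_mul s fun _ _ => measurableSet_singleton v
  have hlimsup : ∀ᵐ ω ∂μ, ω ∈ limsup (fun t => ξ t ⁻¹' {v}) atTop :=
    (ae_iff_measure_eq (MeasurableSet.measurableSet_limsup hsm).nullMeasurableSet).2 <|
      (measure_limsup_eq_one hsm hind (hsum v)).trans measure_univ.symm
  filter_upwards [hlimsup] with ω hω
  exact (mem_limsup_iff_frequently_mem (s := fun t => ξ t ⁻¹' {v})).1 hω

end BorelCantelli

theorem random_function_iteration_convergence_general {m n : ℕ} (hm : 1 < m) (hn : 1 < n)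
    (F : Matrix (Fin m) (Fin m) ℝ → Matrix (Fin n) (Fin n) ℝ)
    (G : Matrix (Fin n) (Fin n) ℝ → Matrix (Fin m) (Fin m) ℝ)
    (LF LG γF γG α : ℝ) (hγF : 0 < γF) (hγG : 0 < γG) (hα : 0 < α) (hα1 : α < 1)
    (hLF : 0 < LF) (hLF' : LF ≤ Real.sqrt α / (Real.sqrt 2 * m * γF))
    (hLG : 0 < LG) (hLG' : LG ≤ 1 / (n * γG))
    (hF : ∀ A A', supNorm (F A - F A') ≤ LF * supNorm (A - A'))
    (hG : ∀ B B', supNorm (G B - G B') ≤ LG * supNorm (B - B'))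
    (Astar : Matrix (Fin m) (Fin m) ℝ) (Bstar : Matrix (Fin n) (Fin n) ℝ)
    (hfix : Astar = γG • G Bstar ∧ Bstar = γF • F Astar)
    {Ω : Type*} [MeasurableSpace Ω] (μ : Measure Ω)
    (ξ : ℕ → Ω → (Fin m × Fin m) × (Fin n × Fin n))
    (hmeas : ∀ t, Measurable (ξ t))
    (hindep : iIndepFun ξ μ)
    (hunif : ∀ t x, μ (ξ t ⁻¹' {x}) = 1 / ((m : ENNReal) ^ 2 * (n : ENNReal) ^ 2))
    (Aseq : Ω → ℕ → Matrix (Fin m) (Fin m) ℝ)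
    (Bseq : Ω → ℕ → Matrix (Fin n) (Fin n) ℝ)
    (hrecB : ∀ ω t, Bseq ω (t + 1)
      = Rop F γF (ξ t ω).2.1 (ξ t ω).2.2 (Aseq ω t) (Bseq ω t))
    (hrecA : ∀ ω t, Aseq ω (t + 1)
      = Sop G γG α (ξ t ω).1.1 (ξ t ω).1.2 (Aseq ω t) (Bseq ω (t + 1))) :
    (1 - α / (m : ℝ) ^ 2 + (1 + α * γG ^ 2 * LG ^ 2) * γF ^ 2 * LF ^ 2 < 1) ∧
    ((1 + α * γG ^ 2 * LG ^ 2) * (1 - 1 / (n : ℝ) ^ 2) < 1) ∧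
    (∀ (A : Matrix (Fin m) (Fin m) ℝ) (B : Matrix (Fin n) (Fin n) ℝ),
      (1 / ((m : ℝ) ^ 2 * (n : ℝ) ^ 2)) *
        ∑ k : Fin m, ∑ l : Fin m, ∑ i : Fin n, ∑ j : Fin n,
          pairDistSq
            (Sop G γG α k l A (Rop F γF i j A B), Rop F γF i j A B) (Astar, Bstar)
        ≤ max (1 - α / (m : ℝ) ^ 2 + (1 + α * γG ^ 2 * LG ^ 2) * γF ^ 2 * LF ^ 2)
              ((1 + α * γG ^ 2 * LG ^ 2) * (1 - 1 / (n : ℝ) ^ 2))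
          * pairDistSq (A, B) (Astar, Bstar)) ∧
    (∀ᵐ ω ∂μ, Filter.Tendsto (fun t => pairDistSq (Aseq ω t, Bseq ω t) (Astar, Bstar))
        Filter.atTop (nhds 0)) := by
  obtain ⟨hA, hB⟩ := hfix
  have hm0 : 0 < m := by omega
  have hn0 : 0 < n := by omega
  have hm2 : (2 : ℝ) ≤ m := by exact_mod_cast hm
  have hn2 : (2 : ℝ) ≤ n := by exact_mod_cast hn
  have hF2 : (γF * LF) ^ 2 ≤ α / (2 * (m : ℝ) ^ 2) := by
    have h := sq_mul_le_of_le_div_mul hγF hLF.le hLF'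
    rw [div_pow, mul_pow, mul_pow, Real.sq_sqrt hα.le, Real.sq_sqrt zero_le_two] at h
    rwa [mul_pow]
  have hG2 : (γG * LG) ^ 2 ≤ 1 / (n : ℝ) ^ 2 := by
    simpa using sq_mul_le_of_le_div_mul hγG hLG.le hLG'
  have hFL : γF * LF < 1 := (le_abs_self _).trans_lt <| (sq_lt_one_iff_abs_lt_one _).1 <|
    hF2.trans_lt <| by rw [div_lt_one (by positivity)]; nlinarith
  have hGL : γG * LG < 1 := (le_abs_self _).trans_lt <| (sq_lt_one_iff_abs_lt_one _).1 <|
    hG2.trans_lt <| by rw [div_lt_one (by positivity)]; nlinarith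
  have hsum : ∀ v, ∑' t, μ (ξ t ⁻¹' {v}) = ⊤ := fun v => by
    simp only [hunif]
    exact ENNReal.tsum_const_eq_top_of_ne_zero (by simp [ENNReal.mul_eq_top])
  refine ⟨rate_A_lt_one hm0 hn0 hα hα1 hF2 hG2, rate_B_lt_one hn0 hα hα1 hG2,
    mean_pairDistSq_le hm0 hn0 hα.le hα1.le hF hG hA hB, ?_⟩
  filter_upwards [ae_frequently_eq_of_iIndepFun hmeas hindep hsum] with ω hω
  exact tendsto_pairDistSq_of_tendsto_pairSupDist <|
    tendsto_pairSupDist_of_frequently hm0 hn0 hα hα1.le hγF.le hγG.le hLG.le hFL hGL hF hG hA hB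
      (hrecB ω) (hrecA ω) hω

theorem random_function_iteration_convergence {m n : ℕ} (hm : 1 < m) (hn : 1 < n)
    (F : Matrix (Fin m) (Fin m) ℝ → Matrix (Fin n) (Fin n) ℝ)
    (G : Matrix (Fin n) (Fin n) ℝ → Matrix (Fin m) (Fin m) ℝ)
    (LF LG γF γG α : ℝ) (hγF : 0 < γF) (hγG : 0 < γG) (hα : 0 < α) (hα1 : α < 1)
    (hLF : 0 < LF) (hLF' : LF ≤ Real.sqrt α / (Real.sqrt 2 * m * γF))
    (hLG : 0 < LG) (hLG' : LG ≤ 1 / (n * γG))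
    (hF : ∀ A A', supNorm (F A - F A') ≤ LF * supNorm (A - A'))
    (hG : ∀ B B', supNorm (G B - G B') ≤ LG * supNorm (B - B'))
    (Astar : Matrix (Fin m) (Fin m) ℝ) (Bstar : Matrix (Fin n) (Fin n) ℝ)
    (hfix : Astar = γG • G Bstar ∧ Bstar = γF • F Astar)
    {Ω : Type*} [MeasurableSpace Ω] (μ : Measure Ω) [IsProbabilityMeasure μ]
    (ξ : ℕ → Ω → (Fin m × Fin m) × (Fin n × Fin n))
    (hmeas : ∀ t, Measurable (ξ t))
    (hindep : iIndepFun ξ μ)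
    (hunif : ∀ t x, μ (ξ t ⁻¹' {x}) = 1 / ((m : ENNReal) ^ 2 * (n : ENNReal) ^ 2))
    (Aseq : Ω → ℕ → Matrix (Fin m) (Fin m) ℝ)
    (Bseq : Ω → ℕ → Matrix (Fin n) (Fin n) ℝ)
    (hrecB : ∀ ω t, Bseq ω (t + 1)
      = Rop F γF (ξ t ω).2.1 (ξ t ω).2.2 (Aseq ω t) (Bseq ω t))
    (hrecA : ∀ ω t, Aseq ω (t + 1)
      = Sop G γG α (ξ t ω).1.1 (ξ t ω).1.2 (Aseq ω t) (Bseq ω (t + 1))) :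
    (1 - α / (m : ℝ) ^ 2 + (1 + α * γG ^ 2 * LG ^ 2) * γF ^ 2 * LF ^ 2 < 1) ∧
    ((1 + α * γG ^ 2 * LG ^ 2) * (1 - 1 / (n : ℝ) ^ 2) < 1) ∧
    (∀ (A : Matrix (Fin m) (Fin m) ℝ) (B : Matrix (Fin n) (Fin n) ℝ),
      (1 / ((m : ℝ) ^ 2 * (n : ℝ) ^ 2)) *
        ∑ k : Fin m, ∑ l : Fin m, ∑ i : Fin n, ∑ j : Fin n,
          pairDistSq
            (Sop G γG α k l A (Rop F γF i j A B), Rop F γF i j A B) (Astar, Bstar)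
        ≤ max (1 - α / (m : ℝ) ^ 2 + (1 + α * γG ^ 2 * LG ^ 2) * γF ^ 2 * LF ^ 2)
              ((1 + α * γG ^ 2 * LG ^ 2) * (1 - 1 / (n : ℝ) ^ 2))
          * pairDistSq (A, B) (Astar, Bstar)) ∧
    (∀ᵐ ω ∂μ, Filter.Tendsto (fun t => pairDistSq (Aseq ω t, Bseq ω t) (Astar, Bstar))
        Filter.atTop (nhds 0)) :=
  random_function_iteration_convergence_general hm hn F G LF LG γF γG α hγF hγG hα hα1 hLF hLF' hLG
    hLG' hF hG Astar Bstar hfix μ ξ hmeas hindep hunif Aseq Bseq hrecB hrecA
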